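/- The fermionic Fock space 𝓕 is irreducible under the Clifford operators: every ℂ-linear subspace of 𝓕 that is invariant under ψ(k) and ψ*(k) for all integers k and contains a nonzero vector is equal to all of 𝓕. -/

import Mathlib

/-!
`ψ(k) ψ*(k)` and `ψ*(k) ψ(k)` are the coordinate projections onto the monomials that do, resp. do
not, contain `k`. Two distinct monomials differ in some entry `k`, so one of these projections keeps
the first and kills the second; applying such projections to a nonzero vector of `W` strips its
support down to a single monomial, hence `W` contains a basis vector. Up to sign, `ψ*(k)` and `ψ(k)`
delete and insert the entry `k`, and any two monomials differ in only finitely many entries, so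
from one basis vector `W` reaches all of them.
-/

open scoped Classical

/-- A semi-infinite monomial: a strictly decreasing sequence `i : ℕ → ℤ`
(written `i₀ > i₁ > i₂ > ⋯`) such that `i n = m - n` for all sufficiently
large `n`, for some integer `m` (the charge). -/
structure SIM : Type where
  seq : ℕ → ℤ
  strictAnti : StrictAnti seq
  charge_exists : ∃ m : ℤ, ∃ N : ℕ, ∀ n ≥ N, seq n = m - n

namespace SIM

/-- `v` has charge `m` if `v n = m - n` for all sufficiently large `n`. -/
def HasCharge (v : SIM) (m : ℤ) : Prop :=
  ∃ N : ℕ, ∀ n ≥ N, v.seq n = m - n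

/-- The charge of a semi-infinite monomial. -/
noncomputable def charge (v : SIM) : ℤ := v.charge_exists.choose

theorem exists_seq_lt (v : SIM) (k : ℤ) : ∃ n, v.seq n < k := by
  obtain ⟨m, N, hN⟩ := v.charge_exists
  refine ⟨max N (m - k + 1).toNat, ?_⟩
  rw [hN _ (le_max_left _ _)]
  have h1 : (m - k + 1).toNat ≤ max N (m - k + 1).toNat := le_max_right _ _
  omega

/-- The position at which `k` is inserted into `v`: the number of entries of `v`
that are greater than `k` (assuming `k` does not occur in `v`). -/
noncomputable def insIdx (v : SIM) (k : ℤ) : ℕ := sInf {n : ℕ | v.seq n < k}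

/-- The monomial obtained from `v` by inserting the entry `k`
(meaningful when `k` does not occur among the entries of `v`; in the unused
case where `k` does occur we simply return `v`). -/
noncomputable def insert (v : SIM) (k : ℤ) : SIM :=
  if h : k ∈ Set.range v.seq then v
  else
    { seq := fun n =>
        if n < v.insIdx k then v.seq n else if n = v.insIdx k then k else v.seq (n - 1)
      strictAnti := by
        have hs : v.seq (v.insIdx k) < k := Nat.sInf_mem (v.exists_seq_lt k)
        have hgt : ∀ n, n < v.insIdx k → k < v.seq n := by
          intro n hn
          have h1 : ¬ v.seq n < k := Nat.notMem_of_lt_sInf hn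
          have h2 : v.seq n ≠ k := fun hh => h ⟨n, hh⟩
          omega
        apply strictAnti_nat_of_succ_lt
        intro n

        rcases lt_trichotomy (n + 1) (v.insIdx k) with h1 | h1 | h1
        · rw [if_pos h1, if_pos (by omega)]
          exact v.strictAnti (Nat.lt_succ_self n)
        · rw [if_neg (by omega), if_pos h1, if_pos (by omega)]
          exact hgt n (by omega)
        · rw [if_neg (by omega), if_neg (by omega)]
          rcases eq_or_lt_of_le (Nat.le_of_lt_succ h1) with h2 | h2
          · rw [if_neg (by omega), if_pos h2.symm]
            simpa [← h2] using hs
          · rw [if_neg (by omega), if_neg (by omega)]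
            exact v.strictAnti (by omega)
      charge_exists := by
        obtain ⟨m, N, hN⟩ := v.charge_exists
        refine ⟨m + 1, max N (v.insIdx k) + 1, fun n hn => ?_⟩

        beta_reduce
        rw [if_neg (by omega), if_neg (by omega), hN (n - 1) (by omega)]
        omega }

/-- The position of the entry `k` in `v` (assuming `k` occurs in `v`). -/
noncomputable def delIdx (v : SIM) (k : ℤ) : ℕ := sInf {n : ℕ | v.seq n ≤ k}

/-- The monomial obtained from `v` by deleting the entry `k`
(meaningful when `k` occurs among the entries of `v`). -/
noncomputable def delete (v : SIM) (k : ℤ) : SIM where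
  seq n := if n < v.delIdx k then v.seq n else v.seq (n + 1)
  strictAnti := by
    apply strictAnti_nat_of_succ_lt
    intro n

    split_ifs <;> exact v.strictAnti (by omega)
  charge_exists := by
    obtain ⟨m, N, hN⟩ := v.charge_exists
    refine ⟨m - 1, max N (v.delIdx k), fun n hn => ?_⟩

    beta_reduce
    rw [if_neg (by omega), hN (n + 1) (by omega)]
    omega

end SIM

/-- The fermionic Fock space: the free ℂ-vector space on the set of all
semi-infinite monomials (of all charges). -/
abbrev Fock : Type := SIM →₀ ℂ

/-- The wedging operator `ψ(k)`: it sends a basis monomial `i₀ > i₁ > ⋯` to `0`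
if `k = i_s` for some `s`, and otherwise to `(−1)^s` times the basis monomial
obtained by inserting `k`, where `s` is the number of entries greater
than `k`. -/
noncomputable def psi (k : ℤ) : Fock →ₗ[ℂ] Fock :=
  Finsupp.lsum ℂ fun v =>
    if k ∈ Set.range v.seq then 0
    else ((-1 : ℂ) ^ v.insIdx k) • Finsupp.lsingle (v.insert k)

/-- The contracting operator `ψ*(k)`: it sends a basis monomial `i₀ > i₁ > ⋯`
to `(−1)^s` times the basis monomial obtained by deleting `i_s` if `k = i_s`,
and to `0` if `k` does not occur among the entries. -/
noncomputable def psiStar (k : ℤ) : Fock →ₗ[ℂ] Fock :=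
  Finsupp.lsum ℂ fun v =>
    if k ∈ Set.range v.seq then ((-1 : ℂ) ^ v.delIdx k) • Finsupp.lsingle (v.delete k)
    else 0

namespace SIM

theorem range_injective : Function.Injective fun v : SIM => Set.range v.seq := by
  intro v w h
  obtain ⟨f, hf, _⟩ := v
  obtain ⟨g, hg, _⟩ := w
  have hfg : f = g := (StrictMono.range_inj (γ := ℤᵒᵈ) hf.dual_right hg.dual_right).1 h
  subst hfg
  rfl

theorem delIdx_eq {v : SIM} {k : ℤ} {n : ℕ} (h : v.seq n = k) : v.delIdx k = n := by
  have hn : n ∈ {j : ℕ | v.seq j ≤ k} := h.le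
  refine le_antisymm (Nat.sInf_le hn) (le_of_not_gt fun hlt => ?_)
  have hmem : v.seq (v.delIdx k) ≤ k := Nat.sInf_mem (s := {j : ℕ | v.seq j ≤ k}) ⟨n, hn⟩
  have := v.strictAnti hlt
  omega

theorem insIdx_eq {v : SIM} {k : ℤ} {n : ℕ} (hn : v.seq n < k)
    (hlt : ∀ j < n, k < v.seq j) : v.insIdx k = n := by
  refine le_antisymm (Nat.sInf_le hn) (le_of_not_gt fun h => ?_)
  have hmem : v.seq (v.insIdx k) < k := Nat.sInf_mem (s := {j : ℕ | v.seq j < k}) ⟨n, hn⟩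
  have := hlt _ h
  omega

theorem delete_seq (v : SIM) (k : ℤ) (j : ℕ) :
    (v.delete k).seq j = if j < v.delIdx k then v.seq j else v.seq (j + 1) := rfl

theorem insert_seq {v : SIM} {k : ℤ} (h : k ∉ Set.range v.seq) (j : ℕ) :
    (v.insert k).seq j =
      if j < v.insIdx k then v.seq j else if j = v.insIdx k then k else v.seq (j - 1) := by
  rw [SIM.insert, dif_neg h]

theorem range_delete {v : SIM} {k : ℤ} (h : k ∈ Set.range v.seq) :
    Set.range (v.delete k).seq = Set.range v.seq \ {k} := by
  obtain ⟨n, hn⟩ := h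
  have hne : ∀ j, j ≠ n → v.seq j ≠ k := fun j hj hjk =>
    hj (v.strictAnti.injective (hjk.trans hn.symm))
  ext z
  simp only [Set.mem_range, Set.mem_sdiff, Set.mem_singleton_iff, delete_seq, delIdx_eq hn]
  constructor
  · rintro ⟨j, rfl⟩
    split_ifs with hj
    · exact ⟨⟨j, rfl⟩, hne j (by omega)⟩
    · exact ⟨⟨j + 1, rfl⟩, hne (j + 1) (by omega)⟩
  · rintro ⟨⟨j, rfl⟩, hjk⟩
    have hjn : j ≠ n := fun hj => hjk (hj ▸ hn)
    rcases lt_or_gt_of_ne hjn with hj | hj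
    · exact ⟨j, if_pos hj⟩
    · exact ⟨j - 1, by rw [if_neg (by omega), Nat.sub_add_cancel (by omega)]⟩

theorem range_insert {v : SIM} {k : ℤ} (h : k ∉ Set.range v.seq) :
    Set.range (v.insert k).seq = Set.range v.seq ∪ {k} := by
  ext z
  simp only [Set.mem_range, Set.mem_union, Set.mem_singleton_iff, insert_seq h]
  constructor
  · rintro ⟨j, rfl⟩
    split_ifs
    · exact Or.inl ⟨j, rfl⟩
    · exact Or.inr rfl
    · exact Or.inl ⟨j - 1, rfl⟩
  · rintro (⟨j, rfl⟩ | rfl)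
    · by_cases hj : j < v.insIdx k
      · exact ⟨j, if_pos hj⟩
      · exact ⟨j + 1, by rw [if_neg (by omega), if_neg (by omega), Nat.add_sub_cancel]⟩
    · exact ⟨v.insIdx z, by simp⟩

theorem notMem_range_delete {v : SIM} {k : ℤ} (h : k ∈ Set.range v.seq) :
    k ∉ Set.range (v.delete k).seq := by
  simp [range_delete h]

theorem mem_range_insert {v : SIM} {k : ℤ} (h : k ∉ Set.range v.seq) :
    k ∈ Set.range (v.insert k).seq := by
  simp [range_insert h]

theorem insert_delete {v : SIM} {k : ℤ} (h : k ∈ Set.range v.seq) :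
    (v.delete k).insert k = v :=
  range_injective <| by
    dsimp only
    rw [range_insert (notMem_range_delete h), range_delete h,
      Set.sdiff_union_of_subset (Set.singleton_subset_iff.2 h)]

theorem delete_insert {v : SIM} {k : ℤ} (h : k ∉ Set.range v.seq) :
    (v.insert k).delete k = v :=
  range_injective <| by
    dsimp only
    rw [range_delete (mem_range_insert h), range_insert h, Set.union_sdiff_right,
      Set.sdiff_singleton_eq_self h]

theorem insIdx_delete {v : SIM} {k : ℤ} (h : k ∈ Set.range v.seq) :
    (v.delete k).insIdx k = v.delIdx k := by
  obtain ⟨n, hn⟩ := h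
  rw [delIdx_eq hn]
  apply insIdx_eq
  · rw [delete_seq, delIdx_eq hn, if_neg (lt_irrefl n), ← hn]
    exact v.strictAnti n.lt_succ_self
  · intro j hj
    rw [delete_seq, delIdx_eq hn, if_pos hj, ← hn]
    exact v.strictAnti hj

theorem delIdx_insert {v : SIM} {k : ℤ} (h : k ∉ Set.range v.seq) :
    (v.insert k).delIdx k = v.insIdx k :=
  delIdx_eq (by simp [insert_seq h])

theorem finite_range_sdiff (v w : SIM) : (Set.range v.seq \ Set.range w.seq).Finite := by
  obtain ⟨m, N, hN⟩ := w.charge_exists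
  refine (Set.finite_Ioc (m - N) (v.seq 0)).subset ?_
  rintro _ ⟨⟨j, rfl⟩, hj⟩
  refine ⟨lt_of_not_ge fun hle => hj ⟨(m - v.seq j).toNat, ?_⟩, v.strictAnti.antitone j.zero_le⟩
  rw [hN _ (by omega)]
  omega

section Connectivity

variable {T : Set SIM}

theorem exists_mem_range_eq_sdiff (hdel : ∀ v ∈ T, ∀ k ∈ Set.range v.seq, v.delete k ∈ T)
    {v : SIM} (hv : v ∈ T) {F : Set ℤ} (hF : F.Finite) (hFv : F ⊆ Set.range v.seq) :
    ∃ u ∈ T, Set.range u.seq = Set.range v.seq \ F := by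
  induction F, hF using Set.Finite.induction_on with
  | empty => exact ⟨v, hv, Set.sdiff_empty.symm⟩
  | @insert a F haF _ ih =>
    obtain ⟨u, hu, hrange⟩ := ih ((Set.subset_insert a F).trans hFv)
    have hau : a ∈ Set.range u.seq := hrange ▸ ⟨hFv (Set.mem_insert a F), haF⟩
    refine ⟨u.delete a, hdel u hu a hau, ?_⟩
    rw [range_delete hau, hrange, Set.sdiff_sdiff, Set.union_singleton]

theorem exists_mem_range_eq_union (hins : ∀ v ∈ T, ∀ k ∉ Set.range v.seq, v.insert k ∈ T)
    {v : SIM} (hv : v ∈ T) {F : Set ℤ} (hF : F.Finite) (hFv : Disjoint F (Set.range v.seq)) :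
    ∃ u ∈ T, Set.range u.seq = Set.range v.seq ∪ F := by
  induction F, hF using Set.Finite.induction_on with
  | empty => exact ⟨v, hv, (Set.union_empty _).symm⟩
  | @insert a F haF _ ih =>
    obtain ⟨u, hu, hrange⟩ := ih (hFv.mono_left (Set.subset_insert a F))
    have hau : a ∉ Set.range u.seq := by
      rw [hrange]
      exact fun h => h.elim (Set.disjoint_left.1 hFv (Set.mem_insert a F)) haF
    refine ⟨u.insert a, hins u hu a hau, ?_⟩
    rw [range_insert hau, hrange, Set.union_assoc, Set.union_singleton]

theorem eq_univ_of_closed (hdel : ∀ v ∈ T, ∀ k ∈ Set.range v.seq, v.delete k ∈ T)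
    (hins : ∀ v ∈ T, ∀ k ∉ Set.range v.seq, v.insert k ∈ T) (hT : T.Nonempty) : T = Set.univ := by
  obtain ⟨v, hv⟩ := hT
  refine Set.eq_univ_of_forall fun w => ?_
  obtain ⟨u, hu, hu_range⟩ := exists_mem_range_eq_sdiff hdel hv (finite_range_sdiff v w)
    Set.sdiff_subset
  rw [Set.sdiff_sdiff_right_self] at hu_range
  obtain ⟨u', hu', hu'_range⟩ := exists_mem_range_eq_union hins hu (finite_range_sdiff w v)
    (by rw [hu_range]; exact Set.disjoint_sdiff_left.mono_right Set.inter_subset_left)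
  have hu'w : u' = w := range_injective <| by
    dsimp only
    rw [hu'_range, hu_range, Set.inter_comm, Set.inter_union_sdiff]
  exact hu'w ▸ hu'

end Connectivity

end SIM

theorem Submodule.single_one_mem_of_mem_support {K α : Type*} [DivisionRing K]
    {W : Submodule K (α →₀ K)}
    (hsep : ∀ v w, v ≠ w → ∃ p : α → Prop, p v ∧ ¬ p w ∧ ∀ x ∈ W, x.filter p ∈ W)
    {x : α →₀ K} (hx : x ∈ W) {v : α} (hv : v ∈ x.support) : Finsupp.single v 1 ∈ W := by
  induction hn : x.support.card using Nat.strong_induction_on generalizing x with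
  | _ n ih =>
    by_cases hxv : x.support ⊆ {v}
    · have hxv0 : x v ≠ 0 := Finsupp.mem_support_iff.mp hv
      have hsingle : x = Finsupp.single v (x v) := Finsupp.support_subset_singleton.mp hxv
      have h := W.smul_mem (x v)⁻¹ hx
      rwa [hsingle, Finsupp.smul_single, smul_eq_mul, Finsupp.single_eq_same,
        inv_mul_cancel₀ hxv0] at h
    · obtain ⟨w, hw, hwv⟩ := Finset.not_subset.mp hxv
      obtain ⟨p, hpv, hpw, hW⟩ := hsep v w (Ne.symm (Finset.notMem_singleton.mp hwv))
      refine ih _ ?_ (hW x hx) (by simp [hv, hpv]) rfl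
      exact hn ▸ Finset.card_lt_card (Finset.filter_ssubset.2 ⟨w, hw, hpw⟩)

theorem psi_single (k : ℤ) (v : SIM) (c : ℂ) :
    psi k (Finsupp.single v c) =
      if k ∈ Set.range v.seq then 0
      else ((-1 : ℂ) ^ v.insIdx k) • Finsupp.single (v.insert k) c := by
  rw [psi, Finsupp.lsum_single]
  split_ifs
  · rfl
  · simp

theorem psiStar_single (k : ℤ) (v : SIM) (c : ℂ) :
    psiStar k (Finsupp.single v c) =
      if k ∈ Set.range v.seq then ((-1 : ℂ) ^ v.delIdx k) • Finsupp.single (v.delete k) c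
      else 0 := by
  rw [psiStar, Finsupp.lsum_single]
  split_ifs
  · simp
  · rfl

theorem neg_one_pow_smul_neg_one_pow_smul {R M : Type*} [Monoid R] [HasDistribNeg R]
    [MulAction R M] (n : ℕ) (x : M) : (-1 : R) ^ n • (-1 : R) ^ n • x = x := by
  rw [smul_smul, ← pow_add, Even.neg_one_pow ⟨n, rfl⟩, one_smul]

theorem psi_psiStar (k : ℤ) (x : Fock) :
    psi k (psiStar k x) = x.filter (fun u => k ∈ Set.range u.seq) := by
  induction x using Finsupp.induction_linear with
  | zero => simp [Finsupp.filter_zero]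
  | add f g hf hg => rw [map_add, map_add, hf, hg, Finsupp.filter_add]
  | single v c =>
    by_cases h : k ∈ Set.range v.seq
    · rw [Finsupp.filter_single_of_pos (fun u : SIM => k ∈ Set.range u.seq) h, psiStar_single,
        if_pos h, map_smul, psi_single, if_neg (SIM.notMem_range_delete h), SIM.insIdx_delete h,
        SIM.insert_delete h, neg_one_pow_smul_neg_one_pow_smul]
    · rw [Finsupp.filter_single_of_neg (fun u : SIM => k ∈ Set.range u.seq) h, psiStar_single,
        if_neg h, map_zero]

theorem psiStar_psi (k : ℤ) (x : Fock) :
    psiStar k (psi k x) = x.filter (fun u => k ∉ Set.range u.seq) := by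
  induction x using Finsupp.induction_linear with
  | zero => simp [Finsupp.filter_zero]
  | add f g hf hg => rw [map_add, map_add, hf, hg, Finsupp.filter_add]
  | single v c =>
    by_cases h : k ∈ Set.range v.seq
    · rw [Finsupp.filter_single_of_neg (fun u : SIM => k ∉ Set.range u.seq) (not_not.2 h),
        psi_single, if_pos h, map_zero]
    · rw [Finsupp.filter_single_of_pos (fun u : SIM => k ∉ Set.range u.seq) h, psi_single,
        if_neg h, map_smul, psiStar_single, if_pos (SIM.mem_range_insert h), SIM.delIdx_insert h,
        SIM.delete_insert h, neg_one_pow_smul_neg_one_pow_smul]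

section Invariant

variable {W : Submodule ℂ Fock}

theorem exists_filter_mem_separating (hpsi : ∀ k : ℤ, ∀ x ∈ W, psi k x ∈ W)
    (hpsiStar : ∀ k : ℤ, ∀ x ∈ W, psiStar k x ∈ W) {v w : SIM} (hvw : v ≠ w) :
    ∃ p : SIM → Prop, p v ∧ ¬ p w ∧ ∀ x ∈ W, x.filter p ∈ W := by
  obtain ⟨k, hk⟩ : ∃ k, ¬ (k ∈ Set.range v.seq ↔ k ∈ Set.range w.seq) :=
    not_forall.mp fun h => hvw (SIM.range_injective (Set.ext h))
  by_cases hkv : k ∈ Set.range v.seq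
  · exact ⟨fun u => k ∈ Set.range u.seq, hkv, fun hkw => hk (iff_of_true hkv hkw),
      fun x hx => psi_psiStar k x ▸ hpsi k _ (hpsiStar k x hx)⟩
  · exact ⟨fun u => k ∉ Set.range u.seq, hkv, fun hkw => hk (iff_of_false hkv hkw),
      fun x hx => by
        -- the two filters differ only in their `Decidable` instances
        convert hpsiStar k _ (hpsi k x hx) using 1
        rw [psiStar_psi]
        congr!⟩

theorem single_delete_mem (hpsiStar : ∀ k : ℤ, ∀ x ∈ W, psiStar k x ∈ W) {v : SIM} {k : ℤ}
    (h : k ∈ Set.range v.seq) (hv : Finsupp.single v (1 : ℂ) ∈ W) :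
    Finsupp.single (v.delete k) (1 : ℂ) ∈ W := by
  have hmem := hpsiStar k _ hv
  rwa [psiStar_single, if_pos h, W.smul_mem_iff (pow_ne_zero _ (neg_ne_zero.2 one_ne_zero))]
    at hmem

theorem single_insert_mem (hpsi : ∀ k : ℤ, ∀ x ∈ W, psi k x ∈ W) {v : SIM} {k : ℤ}
    (h : k ∉ Set.range v.seq) (hv : Finsupp.single v (1 : ℂ) ∈ W) :
    Finsupp.single (v.insert k) (1 : ℂ) ∈ W := by
  have hmem := hpsi k _ hv
  rwa [psi_single, if_neg h, W.smul_mem_iff (pow_ne_zero _ (neg_ne_zero.2 one_ne_zero))]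
    at hmem

end Invariant

/-- The fermionic Fock space `𝓕` is irreducible under the Clifford operators:
every ℂ-linear subspace invariant under all `ψ(k)` and `ψ*(k)` and containing a
nonzero vector is all of `𝓕`. -/
theorem fock_irreducible_under_clifford (W : Submodule ℂ Fock)
    (hpsi : ∀ k : ℤ, ∀ x ∈ W, psi k x ∈ W)
    (hpsiStar : ∀ k : ℤ, ∀ x ∈ W, psiStar k x ∈ W)
    (hne : ∃ x ∈ W, x ≠ 0) : W = ⊤ := by
  obtain ⟨x, hxW, hx0⟩ := hne
  obtain ⟨v, hv⟩ := Finsupp.support_nonempty_iff.mpr hx0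
  have hbasis : {u : SIM | Finsupp.single u (1 : ℂ) ∈ W} = Set.univ :=
    SIM.eq_univ_of_closed (fun _ hu _ hk => single_delete_mem hpsiStar hk hu)
      (fun _ hu _ hk => single_insert_mem hpsi hk hu)
      ⟨v, Submodule.single_one_mem_of_mem_support
        (fun _ _ => exists_filter_mem_separating hpsi hpsiStar) hxW hv⟩
  rw [eq_top_iff, ← Finsupp.basisSingleOne.span_eq, Submodule.span_le, Finsupp.coe_basisSingleOne]
  rintro _ ⟨u, rfl⟩
  exact Set.eq_univ_iff_forall.mp hbasis u
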